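/- arXiv:1207.5091 — 2 statements merged into one kernel-verified Lean document; each statement's English description precedes it below -/
import Mathlib

section
/- For finite sets S₁, S₂, distributions μ₁ ∈ Dist(S₁), μ₂ ∈ Dist(S₂), and a relation R ⊆ S₁ × S₂, there exists a weight function w : S₁ × S₂ → ℚ ∩ [0,1] satisfying (1) μ₁(s₁) = Σ_{s₂} w(s₁,s₂) for all s₁, (2) μ₂(s₂) = Σ_{s₁} w(s₁,s₂) for all s₂, and (3) w(s₁,s₂) > 0 implies s₁ R s₂, if and only if for every subset S ⊆ supp(μ₁), μ₁(S) ≤ μ₂(R(S)), where R(S) = {s₂ | ∃ s₁ ∈ S, s₁ R s₂}. -/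
open Finset
open scoped Classical

/-- A discrete probability distribution on a finite set `S`, with rational values. -/
structure PDist (S : Type) [Fintype S] where
  prob : S → ℚ
  nonneg : ∀ s, 0 ≤ prob s
  sum_one : ∑ s, prob s = 1

/-! Scaling by a common denominator reduces the problem to integer masses. Replacing each
`s₁` by `ν₁ s₁` copies and each `s₂` by `ν₂ s₂` copies, the weighted Hall condition becomes the
ordinary Hall condition, so Hall's marriage theorem gives a perfect matching of the copies;
counting the matched pairs of copies of `s₁` and `s₂` gives the weight of `(s₁, s₂)`. -/

variable {S₁ S₂ M : Type*} [Fintype S₂]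

noncomputable def relImage (R : S₁ → S₂ → Prop) (T : Finset S₁) : Finset S₂ :=
  Finset.univ.filter (fun t => ∃ s ∈ T, R s t)

lemma relImage_mono (R : S₁ → S₂ → Prop) {T U : Finset S₁} (h : T ⊆ U) :
    relImage R T ⊆ relImage R U := by
  intro t
  simp only [relImage, mem_filter, mem_univ, true_and]
  exact fun ⟨s, hs, hst⟩ => ⟨s, h hs, hst⟩

def HallCondition [AddCommMonoid M] [LE M] (R : S₁ → S₂ → Prop) (μ₁ : S₁ → M) (μ₂ : S₂ → M) :
    Prop :=
  ∀ T : Finset S₁, ∑ s ∈ T, μ₁ s ≤ ∑ t ∈ relImage R T, μ₂ t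

structure IsWeightFunction [Fintype S₁] [AddCommMonoid M] [PartialOrder M] (R : S₁ → S₂ → Prop)
    (μ₁ : S₁ → M) (μ₂ : S₂ → M) (w : S₁ → S₂ → M) : Prop where
  nonneg : ∀ s t, 0 ≤ w s t
  sum_right : ∀ s, ∑ t, w s t = μ₁ s
  sum_left : ∀ t, ∑ s, w s t = μ₂ t
  rel_of_pos : ∀ s t, 0 < w s t → R s t

section Ordered

variable [AddCommMonoid M] [PartialOrder M] [IsOrderedAddMonoid M] {R : S₁ → S₂ → Prop}
  {μ₁ : S₁ → M} {μ₂ : S₂ → M}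

lemma HallCondition.of_forall_pos (h₁ : ∀ s, 0 ≤ μ₁ s) (h₂ : ∀ t, 0 ≤ μ₂ t)
    (hall : ∀ T : Finset S₁, (∀ s ∈ T, 0 < μ₁ s) →
      ∑ s ∈ T, μ₁ s ≤ ∑ t ∈ relImage R T, μ₂ t) :
    HallCondition R μ₁ μ₂ := by
  intro T
  calc ∑ s ∈ T, μ₁ s = ∑ s ∈ T with 0 < μ₁ s, μ₁ s :=
        (sum_filter_of_ne fun s _ hne => lt_of_le_of_ne (h₁ s) (Ne.symm hne)).symm
    _ ≤ ∑ t ∈ relImage R {s ∈ T | 0 < μ₁ s}, μ₂ t :=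
        hall _ fun s hs => (mem_filter.1 hs).2
    _ ≤ ∑ t ∈ relImage R T, μ₂ t :=
        sum_le_sum_of_subset_of_nonneg (relImage_mono R (filter_subset _ _)) fun t _ _ => h₂ t

variable [Fintype S₁]

lemma IsWeightFunction.le_left {w : S₁ → S₂ → M} (hw : IsWeightFunction R μ₁ μ₂ w)
    (s : S₁) (t : S₂) : w s t ≤ μ₁ s :=
  hw.sum_right s ▸ single_le_sum (fun t _ => hw.nonneg s t) (mem_univ t)

lemma IsWeightFunction.hallCondition {w : S₁ → S₂ → M} (hw : IsWeightFunction R μ₁ μ₂ w) :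
    HallCondition R μ₁ μ₂ := by
  intro T
  have hrow : ∀ s ∈ T, μ₁ s = ∑ t ∈ relImage R T, w s t := by
    intro s hs
    rw [← hw.sum_right s]
    refine (sum_subset (subset_univ _) fun t _ ht => ?_).symm
    by_contra hne
    refine ht ?_
    simp only [relImage, mem_filter, mem_univ, true_and]
    exact ⟨s, hs, hw.rel_of_pos s t (lt_of_le_of_ne (hw.nonneg s t) (Ne.symm hne))⟩
  calc ∑ s ∈ T, μ₁ s = ∑ t ∈ relImage R T, ∑ s ∈ T, w s t := by
        rw [sum_congr rfl hrow, sum_comm]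
    _ ≤ ∑ t ∈ relImage R T, ∑ s, w s t :=
        sum_le_sum fun t _ => sum_le_sum_of_subset_of_nonneg (subset_univ T)
          fun s _ _ => hw.nonneg s t
    _ = ∑ t ∈ relImage R T, μ₂ t := sum_congr rfl fun t _ => hw.sum_left t

end Ordered

section Counting

variable [Fintype S₁] {R : S₁ → S₂ → Prop}

lemma isWeightFunction_card_of_bijective {X Y : Type*} [Fintype X] [Fintype Y]
    (p : X → S₁) (q : Y → S₂) {f : X → Y} (hf : f.Bijective) (hR : ∀ x, R (p x) (q (f x))) :
    IsWeightFunction R (fun s => #{x | p x = s}) (fun t => #{y | q y = t})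
      (fun s t => #{x | p x = s ∧ q (f x) = t}) where
  nonneg _ _ := Nat.zero_le _
  sum_right s := by
    rw [card_eq_sum_card_fiberwise (s := {x | p x = s}) (f := fun x => q (f x)) (t := univ)
      fun _ _ => mem_univ _]
    simp only [filter_filter]
  sum_left t := by
    have hcard : #{x | q (f x) = t} = #{y | q y = t} :=
      card_bij (fun x _ => f x) (fun x hx => by simpa using hx) (fun _ _ _ _ h => hf.1 h)
        fun y hy => by obtain ⟨x, rfl⟩ := hf.2 y; exact ⟨x, by simpa using hy, rfl⟩
    rw [← hcard, card_eq_sum_card_fiberwise (s := {x | q (f x) = t}) (f := p) (t := univ)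
      fun _ _ => mem_univ _]
    simp only [filter_filter, and_comm]
  rel_of_pos s t h := by
    obtain ⟨x, hx⟩ := card_pos.1 h
    obtain ⟨rfl, rfl⟩ := (mem_filter.1 hx).2
    exact hR x

lemma card_filter_sigma_fst_eq {S : Type*} [Fintype S] (ν : S → ℕ) (s : S) :
    #{x : Σ s, Fin (ν s) | x.1 = s} = ν s := by
  have : ({x : Σ s, Fin (ν s) | x.1 = s} : Finset _) = ({s} : Finset S).sigma fun _ => univ := by
    ext ⟨s', i⟩
    simp
  simp [this]

lemma HallCondition.card_le_card_sigma {ν₁ : S₁ → ℕ} {ν₂ : S₂ → ℕ} (hall : HallCondition R ν₁ ν₂)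
    (A : Finset (Σ s, Fin (ν₁ s))) :
    #A ≤ #{y : Σ t, Fin (ν₂ t) | ∃ x ∈ A, R x.1 y.1} := by
  have himage : ({y : Σ t, Fin (ν₂ t) | ∃ x ∈ A, R x.1 y.1} : Finset _) =
      (relImage R (A.image Sigma.fst)).sigma fun _ => univ := by
    ext ⟨t, j⟩
    simp [relImage]
  calc #A ≤ #((A.image Sigma.fst).sigma fun s => (univ : Finset (Fin (ν₁ s)))) :=
        card_le_card fun x hx => by simpa using ⟨x.2, hx⟩
    _ ≤ #{y : Σ t, Fin (ν₂ t) | ∃ x ∈ A, R x.1 y.1} := by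
        rw [himage, card_sigma, card_sigma]
        simpa using hall (A.image Sigma.fst)

theorem HallCondition.exists_isWeightFunction_nat {ν₁ : S₁ → ℕ} {ν₂ : S₂ → ℕ}
    (hall : HallCondition R ν₁ ν₂) (hsum : ∑ s, ν₁ s = ∑ t, ν₂ t) :
    ∃ w, IsWeightFunction R ν₁ ν₂ w := by
  obtain ⟨f, hf, hfR⟩ := (Fintype.all_card_le_filter_rel_iff_exists_injective
    fun (x : Σ s, Fin (ν₁ s)) (y : Σ t, Fin (ν₂ t)) => R x.1 y.1).1 hall.card_le_card_sigma
  have hbij : f.Bijective := (Fintype.bijective_iff_injective_and_card f).2 ⟨hf, by simp [hsum]⟩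
  have hw := isWeightFunction_card_of_bijective Sigma.fst Sigma.fst hbij hfR
  simp only [card_filter_sigma_fst_eq] at hw
  exact ⟨_, hw⟩

end Counting

lemma Rat.exists_natCast_eq_mul_of_den_dvd {q : ℚ} (hq : 0 ≤ q) {d : ℕ} (hd : q.den ∣ d) :
    ∃ n : ℕ, (n : ℚ) = d * q := by
  obtain ⟨k, rfl⟩ := hd
  refine ⟨k * q.num.toNat, ?_⟩
  have hnum : ((q.num.toNat : ℤ) : ℚ) = q * q.den := by
    rw [Int.toNat_of_nonneg (Rat.num_nonneg.2 hq), Rat.mul_den_eq_num]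
  push_cast at hnum ⊢
  rw [hnum]
  ring

section Scaling

variable {K : Type*} [Field K] [LinearOrder K] [IsStrictOrderedRing K] {R : S₁ → S₂ → Prop}

lemma HallCondition.const_mul {μ₁ : S₁ → K} {μ₂ : S₂ → K} (hall : HallCondition R μ₁ μ₂)
    {c : K} (hc : 0 ≤ c) : HallCondition R (fun s => c * μ₁ s) (fun t => c * μ₂ t) := by
  intro T
  simp only [← mul_sum]
  exact mul_le_mul_of_nonneg_left (hall T) hc

lemma HallCondition.of_natCast {ν₁ : S₁ → ℕ} {ν₂ : S₂ → ℕ}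
    (hall : HallCondition R (fun s => (ν₁ s : K)) (fun t => (ν₂ t : K))) :
    HallCondition R ν₁ ν₂ :=
  fun T => by simpa only [← Nat.cast_sum, Nat.cast_le] using hall T

lemma IsWeightFunction.natCast_div [Fintype S₁] {ν₁ : S₁ → ℕ} {ν₂ : S₂ → ℕ} {w : S₁ → S₂ → ℕ}
    (hw : IsWeightFunction R ν₁ ν₂ w) (d : ℕ) :
    IsWeightFunction R (fun s => (ν₁ s : K) / d) (fun t => (ν₂ t : K) / d)
      (fun s t => (w s t : K) / d) where
  nonneg _ _ := by positivity
  sum_right s := by rw [← sum_div, ← hw.sum_right s, Nat.cast_sum]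
  sum_left t := by rw [← sum_div, ← hw.sum_left t, Nat.cast_sum]
  rel_of_pos s t h := hw.rel_of_pos s t <| Nat.pos_of_ne_zero fun h0 => by simp [h0] at h

end Scaling

theorem HallCondition.exists_isWeightFunction [Fintype S₁] {R : S₁ → S₂ → Prop}
    {μ₁ : S₁ → ℚ} {μ₂ : S₂ → ℚ} (hall : HallCondition R μ₁ μ₂) (h₁ : ∀ s, 0 ≤ μ₁ s)
    (h₂ : ∀ t, 0 ≤ μ₂ t) (hsum : ∑ s, μ₁ s = ∑ t, μ₂ t) :
    ∃ w, IsWeightFunction R μ₁ μ₂ w := by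
  set d : ℕ := (∏ s, (μ₁ s).den) * ∏ t, (μ₂ t).den
  have hd : (d : ℚ) ≠ 0 := by positivity
  choose ν₁ hν₁ using fun s => Rat.exists_natCast_eq_mul_of_den_dvd (h₁ s) (d := d)
    (dvd_mul_of_dvd_left (dvd_prod_of_mem _ (mem_univ s)) _)
  choose ν₂ hν₂ using fun t => Rat.exists_natCast_eq_mul_of_den_dvd (h₂ t) (d := d)
    (dvd_mul_of_dvd_right (dvd_prod_of_mem _ (mem_univ t)) _)
  have hallν : HallCondition R ν₁ ν₂ :=
    HallCondition.of_natCast (K := ℚ) (by simpa only [hν₁, hν₂] using hall.const_mul d.cast_nonneg)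
  have hsumν : ∑ s, ν₁ s = ∑ t, ν₂ t := by
    have : (∑ s, ν₁ s : ℚ) = ∑ t, ν₂ t := by
      simp only [Nat.cast_sum, hν₁, hν₂, ← mul_sum, hsum]
    exact_mod_cast this
  obtain ⟨w, hw⟩ := hallν.exists_isWeightFunction_nat hsumν
  have hμ₁ : (fun s => (ν₁ s : ℚ) / d) = μ₁ := funext fun s => by
    rw [hν₁, mul_div_cancel_left₀ _ hd]
  have hμ₂ : (fun t => (ν₂ t : ℚ) / d) = μ₂ := funext fun t => by
    rw [hν₂, mul_div_cancel_left₀ _ hd]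
  exact ⟨_, hμ₁ ▸ hμ₂ ▸ hw.natCast_div d⟩

theorem weight_function_iff_hall_general
    {S₁ S₂ : Type} [Fintype S₁] [Fintype S₂]
    (μ₁ : PDist S₁) (μ₂ : PDist S₂) (R : S₁ → S₂ → Prop) :
    (∃ w : S₁ → S₂ → ℚ,
      (∀ s₁ s₂, 0 ≤ w s₁ s₂ ∧ w s₁ s₂ ≤ 1) ∧
      (∀ s₁, μ₁.prob s₁ = ∑ s₂, w s₁ s₂) ∧
      (∀ s₂, μ₂.prob s₂ = ∑ s₁, w s₁ s₂) ∧
      (∀ s₁ s₂, 0 < w s₁ s₂ → R s₁ s₂)) ↔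
    (∀ T : Finset S₁, (∀ s ∈ T, 0 < μ₁.prob s) →
      ∑ s ∈ T, μ₁.prob s ≤
        ∑ t ∈ Finset.univ.filter (fun t => ∃ s ∈ T, R s t), μ₂.prob t) := by
  constructor
  · rintro ⟨w, hw, hrow, hcol, hR⟩ T -
    exact IsWeightFunction.hallCondition
      ⟨fun s t => (hw s t).1, fun s => (hrow s).symm, fun t => (hcol t).symm, hR⟩ T
  · intro hall
    obtain ⟨w, hw⟩ := (HallCondition.of_forall_pos μ₁.nonneg μ₂.nonneg hall).exists_isWeightFunction
      μ₁.nonneg μ₂.nonneg (μ₁.sum_one.trans μ₂.sum_one.symm)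
    refine ⟨w, fun s t => ⟨hw.nonneg s t, ?_⟩, fun s => (hw.sum_right s).symm,
      fun t => (hw.sum_left t).symm, hw.rel_of_pos⟩
    calc w s t ≤ μ₁.prob s := hw.le_left s t
      _ ≤ 1 := μ₁.sum_one ▸ single_le_sum (fun s _ => μ₁.nonneg s) (mem_univ s)

/-- Hall-type characterization of the existence of a weight function:
there is a weight function `w : S₁ × S₂ → ℚ ∩ [0,1]` with marginals `μ₁`, `μ₂` and support
contained in `R` iff for every subset `T` of the support of `μ₁`, `μ₁(T) ≤ μ₂(R(T))`. -/
theorem weight_function_iff_hall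
    {S₁ S₂ : Type} [Fintype S₁] [Fintype S₂] [Nonempty S₁] [Nonempty S₂]
    (μ₁ : PDist S₁) (μ₂ : PDist S₂) (R : S₁ → S₂ → Prop) :
    (∃ w : S₁ → S₂ → ℚ,
      (∀ s₁ s₂, 0 ≤ w s₁ s₂ ∧ w s₁ s₂ ≤ 1) ∧
      (∀ s₁, μ₁.prob s₁ = ∑ s₂, w s₁ s₂) ∧
      (∀ s₂, μ₂.prob s₂ = ∑ s₁, w s₁ s₂) ∧
      (∀ s₁ s₂, 0 < w s₁ s₂ → R s₁ s₂)) ↔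
    (∀ T : Finset S₁, (∀ s ∈ T, 0 < μ₁.prob s) →
      ∑ s ∈ T, μ₁.prob s ≤
        ∑ t ∈ Finset.univ.filter (fun t => ∃ s ∈ T, R s t), μ₂.prob t) :=
  weight_function_iff_hall_general μ₁ μ₂ R
end

section
/- The lifting of distributions by weight functions composes: if μ₁ ⊑_{R₁} μ₂ via relation R₁ ⊆ S₁ × S₂ and μ₂ ⊑_{R₂} μ₃ via relation R₂ ⊆ S₂ × S₃, then μ₁ ⊑_{R₂∘R₁} μ₃, where R₂∘R₁ = {(s₁,s₃) | ∃ s₂, (s₁,s₂) ∈ R₁ ∧ (s₂,s₃) ∈ R₂}. -/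
open Finset

/-- The lifting `μ₁ ⊑_R μ₂` of a relation `R` to distributions, via a weight function. -/
def DistLe {S₁ S₂ : Type} [Fintype S₁] [Fintype S₂]
    (R : S₁ → S₂ → Prop) (μ₁ : PDist S₁) (μ₂ : PDist S₂) : Prop :=
  ∃ w : S₁ → S₂ → ℚ,
    (∀ s₁ s₂, 0 ≤ w s₁ s₂ ∧ w s₁ s₂ ≤ 1) ∧
    (∀ s₁, μ₁.prob s₁ = ∑ s₂, w s₁ s₂) ∧
    (∀ s₂, μ₂.prob s₂ = ∑ s₁, w s₁ s₂) ∧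
    (∀ s₁ s₂, 0 < w s₁ s₂ → R s₁ s₂)

/-!
Glue the two weight functions along their common marginal `μ₂`, i.e. make the first and third
coordinates conditionally independent given the second:
`w a c = ∑ b, w₁ a b * w₂ b c / μ₂ b`.
Summing out `c` (resp. `a`) turns one factor into `μ₂ b`, which cancels the division and leaves
the marginal `μ₁` (resp. `μ₃`); and `w a c > 0` forces some `b` with `w₁ a b > 0` and `w₂ b c > 0`,
a witness for the composed relation.
-/

section CompWeight

variable {𝕜 : Type*} [Field 𝕜] [LinearOrder 𝕜]
  {S₁ S₂ S₃ : Type*} [Fintype S₂]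

/-- Where `ν b = 0`, the junk value `x / 0 = 0` is harmless: both `w₁ · b` and `w₂ b ·` vanish
there whenever `ν` is their common marginal. -/
def compWeight (w₁ : S₁ → S₂ → 𝕜) (ν : S₂ → 𝕜) (w₂ : S₂ → S₃ → 𝕜) : S₁ → S₃ → 𝕜 :=
  fun a c => ∑ b, w₁ a b * w₂ b c / ν b

variable {w₁ : S₁ → S₂ → 𝕜} {ν : S₂ → 𝕜} {w₂ : S₂ → S₃ → 𝕜}

lemma compWeight_nonneg [IsStrictOrderedRing 𝕜] (hw₁ : ∀ a b, 0 ≤ w₁ a b) (hν : ∀ b, 0 ≤ ν b)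
    (hw₂ : ∀ b c, 0 ≤ w₂ b c) (a : S₁) (c : S₃) : 0 ≤ compWeight w₁ ν w₂ a c :=
  sum_nonneg fun b _ => div_nonneg (mul_nonneg (hw₁ a b) (hw₂ b c)) (hν b)

lemma sum_compWeight_right [IsStrictOrderedRing 𝕜] [Fintype S₁] [Fintype S₃]
    (hw₁ : ∀ a b, 0 ≤ w₁ a b) (hν₁ : ∀ b, ν b = ∑ a, w₁ a b) (hν₂ : ∀ b, ν b = ∑ c, w₂ b c)
    (a : S₁) :
    ∑ c, compWeight w₁ ν w₂ a c = ∑ b, w₁ a b := by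
  simp only [compWeight]
  rw [sum_comm]
  refine sum_congr rfl fun b _ => ?_
  rw [← sum_div, ← mul_sum, ← hν₂ b]
  by_cases hb : ν b = 0
  · have hw₁b : w₁ a b = 0 :=
      (sum_eq_zero_iff_of_nonneg fun a _ => hw₁ a b).1 ((hν₁ b).symm.trans hb) a (mem_univ a)
    simp [hw₁b]
  · exact mul_div_cancel_right₀ _ hb

lemma sum_compWeight_left [IsStrictOrderedRing 𝕜] [Fintype S₁] [Fintype S₃]
    (hw₂ : ∀ b c, 0 ≤ w₂ b c) (hν₁ : ∀ b, ν b = ∑ a, w₁ a b) (hν₂ : ∀ b, ν b = ∑ c, w₂ b c)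
    (c : S₃) :
    ∑ a, compWeight w₁ ν w₂ a c = ∑ b, w₂ b c := by
  simp only [compWeight]
  rw [sum_comm]
  refine sum_congr rfl fun b _ => ?_
  rw [← sum_div, ← sum_mul, ← hν₁ b]
  by_cases hb : ν b = 0
  · have hw₂b : w₂ b c = 0 :=
      (sum_eq_zero_iff_of_nonneg fun c _ => hw₂ b c).1 ((hν₂ b).symm.trans hb) c (mem_univ c)
    simp [hw₂b]
  · exact mul_div_cancel_left₀ _ hb

lemma exists_pos_pos_of_compWeight_pos (hw₁ : ∀ a b, 0 ≤ w₁ a b) (hw₂ : ∀ b c, 0 ≤ w₂ b c)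
    {a : S₁} {c : S₃} (h : 0 < compWeight w₁ ν w₂ a c) :
    ∃ b, 0 < w₁ a b ∧ 0 < w₂ b c := by
  obtain ⟨b, -, hb⟩ := exists_ne_zero_of_sum_ne_zero h.ne'
  have hprod : w₁ a b * w₂ b c ≠ 0 := (div_ne_zero_iff.1 hb).1
  exact ⟨b, (hw₁ a b).lt_of_ne' (left_ne_zero_of_mul hprod),
    (hw₂ b c).lt_of_ne' (right_ne_zero_of_mul hprod)⟩

end CompWeight

lemma PDist.prob_le_one {S : Type} [Fintype S] (μ : PDist S) (s : S) : μ.prob s ≤ 1 :=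
  μ.sum_one ▸ single_le_sum (fun t _ => μ.nonneg t) (mem_univ s)

/-- Lifting composes: `μ₁ ⊑_{R₁} μ₂` and `μ₂ ⊑_{R₂} μ₃` imply `μ₁ ⊑_{R₂∘R₁} μ₃`. -/
theorem distLe_comp {S₁ S₂ S₃ : Type} [Fintype S₁] [Fintype S₂] [Fintype S₃]
    (R₁ : S₁ → S₂ → Prop) (R₂ : S₂ → S₃ → Prop)
    (μ₁ : PDist S₁) (μ₂ : PDist S₂) (μ₃ : PDist S₃)
    (h₁ : DistLe R₁ μ₁ μ₂) (h₂ : DistLe R₂ μ₂ μ₃) :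
    DistLe (fun s₁ s₃ => ∃ s₂, R₁ s₁ s₂ ∧ R₂ s₂ s₃) μ₁ μ₃ := by
  obtain ⟨w₁, hw₁, hμ₁, hμ₂, hR₁⟩ := h₁
  obtain ⟨w₂, hw₂, hμ₂', hμ₃, hR₂⟩ := h₂
  have hw₁0 a b : 0 ≤ w₁ a b := (hw₁ a b).1
  have hw₂0 b c : 0 ≤ w₂ b c := (hw₂ b c).1
  have hw0 := compWeight_nonneg hw₁0 μ₂.nonneg hw₂0
  have hcol c : ∑ a, compWeight w₁ μ₂.prob w₂ a c = μ₃.prob c := by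
    rw [sum_compWeight_left hw₂0 hμ₂ hμ₂', hμ₃]
  refine ⟨compWeight w₁ μ₂.prob w₂, fun a c => ⟨hw0 a c, ?_⟩, fun a => ?_, fun c => (hcol c).symm,
    fun a c h => ?_⟩
  · calc compWeight w₁ μ₂.prob w₂ a c ≤ μ₃.prob c :=
          hcol c ▸ single_le_sum (fun a _ => hw0 a c) (mem_univ a)
      _ ≤ 1 := μ₃.prob_le_one c
  · rw [sum_compWeight_right hw₁0 hμ₂ hμ₂', hμ₁]
  · obtain ⟨b, hab, hbc⟩ := exists_pos_pos_of_compWeight_pos hw₁0 hw₂0 h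
    exact ⟨b, hR₁ a b hab, hR₂ b c hbc⟩
end
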